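/- If N is a flow network of external dimension 2 with one input arc a₁ and one output arc a₂, then a total typing T is the principal typing of some network with these boundary arcs iff there exist 0 ≤ r ≤ s with T(∅) = T({a₁,a₂}) = [0,0], T({a₁}) = [r,s] and T({a₂}) = [−s,−r]; moreover any such T is realized by a one-node network. -/

import Mathlib

open Finset

namespace FlowTyping

noncomputable section

/-- A typing assigns (optionally) a closed interval `[r, s]` (encoded as a pair)
to subsets of the input/output arcs. -/
abbrev Typing (ι : Type*) := Finset ι → Option (ℝ × ℝ)

variable {ι : Type*} [Fintype ι] [DecidableEq ι]

/-- `theta isIn A f` = sum of `f` over the input arcs in `A` minus the sum of `f`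
over the output arcs in `A`. -/
def theta (isIn : ι → Bool) (A : Finset ι) (f : ι → ℝ) : ℝ :=
  ∑ a ∈ A, (if isIn a then f a else - f a)

/-- An IO assignment (a nonnegative function on the input/output arcs) satisfies a
typing `T` if for every subset `A` where `T A` is defined, `theta A f ∈ T A`. -/
def Satisfies (isIn : ι → Bool) (T : Typing ι) (f : ι → ℝ) : Prop :=
  (∀ a, 0 ≤ f a) ∧
    ∀ A r s, T A = some (r, s) → r ≤ theta isIn A f ∧ theta isIn A f ≤ s

/-- The polytope of all IO assignments satisfying the typing `T`. -/
def Poly (isIn : ι → Bool) (T : Typing ι) : Set (ι → ℝ) := {f | Satisfies isIn T f}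

/-- Well-formedness: every assigned interval is a genuine interval `[r, s]`, `r ≤ s`. -/
def WF (T : Typing ι) : Prop := ∀ A r s, T A = some (r, s) → r ≤ s

/-- A typing is total if it is defined on every subset of the input/output arcs. -/
def TotalT (T : Typing ι) : Prop := ∀ A, (T A).isSome

/-- A typing is tight if every value of every assigned interval is attained on the
polytope `Poly T`. -/
def Tight (isIn : ι → Bool) (T : Typing ι) : Prop :=
  ∀ A r s, T A = some (r, s) → ∀ x, r ≤ x → x ≤ s →
    ∃ f ∈ Poly isIn T, theta isIn A f = x

/-- A flow network: a finite set of nodes `V`, a finite set of internal arcs `E`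
(each with a source and a target node), input/output arcs indexed by `ι`
(each attached to a node; `isIn a` tells whether `a` is an input arc), and
lower/upper capacities on all arcs. -/
structure Network (ι : Type*) (isIn : ι → Bool) where
  V : Type
  E : Type
  [fintV : Fintype V]
  [fintE : Fintype E]
  [decV : DecidableEq V]
  src : E → V
  tgt : E → V
  ioNode : ι → V
  lcE : E → ℝ
  ucE : E → ℝ
  lcIO : ι → ℝ
  ucIO : ι → ℝ
  lcE_nonneg : ∀ e, 0 ≤ lcE e
  lcE_le_ucE : ∀ e, lcE e ≤ ucE e
  lcIO_nonneg : ∀ a, 0 ≤ lcIO a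
  lcIO_le_ucIO : ∀ a, lcIO a ≤ ucIO a

attribute [instance] Network.fintV Network.fintE Network.decV

variable {isIn : ι → Bool}

/-- `f` (on the io arcs) together with `g` (on the internal arcs) is a feasible
flow: capacity constraints on every arc, and flow conservation at every node. -/
def Network.Feasible (N : Network ι isIn) (f : ι → ℝ) (g : N.E → ℝ) : Prop :=
  (∀ a, N.lcIO a ≤ f a ∧ f a ≤ N.ucIO a) ∧
  (∀ e, N.lcE e ≤ g e ∧ g e ≤ N.ucE e) ∧
  ∀ v : N.V,
    ((∑ e : N.E, if N.tgt e = v then g e else 0) +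
        ∑ a : ι, if N.ioNode a = v ∧ isIn a then f a else 0) =
      ((∑ e : N.E, if N.src e = v then g e else 0) +
        ∑ a : ι, if N.ioNode a = v ∧ ¬ isIn a then f a else 0)

/-- A typing is sound for `N` if every IO assignment satisfying it extends to a
feasible flow in `N`. -/
def Sound (N : Network ι isIn) (T : Typing ι) : Prop :=
  ∀ f ∈ Poly isIn T, ∃ g : N.E → ℝ, N.Feasible f g

/-- A typing is complete for `N` if every feasible flow of `N` (restricted to the
io arcs) satisfies it. -/
def Complete (N : Network ι isIn) (T : Typing ι) : Prop :=
  ∀ f g, N.Feasible f g → Satisfies isIn T f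

/-- Undirected adjacency of nodes via internal arcs. -/
def NAdj (N : Network ι isIn) (v w : N.V) : Prop :=
  ∃ e : N.E, (N.src e = v ∧ N.tgt e = w) ∨ (N.src e = w ∧ N.tgt e = v)

/-- Two io arcs belong to the same (connected) component of the network. -/
def SameComp (N : Network ι isIn) (a b : ι) : Prop :=
  Relation.ReflTransGen (NAdj N) (N.ioNode a) (N.ioNode b)

/-- `T` is locally total for `N`: it is defined on every set of io arcs lying in a
single component, and undefined on every union of two nonempty sets of io arcs
from two distinct components. -/
def LocallyTotal (N : Network ι isIn) (T : Typing ι) : Prop :=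
  (∀ B : Finset ι, (∀ a ∈ B, ∀ b ∈ B, SameComp N a b) → (T B).isSome) ∧
  (∀ B B' : Finset ι, B.Nonempty → B'.Nonempty →
    (∀ a ∈ B, ∀ b ∈ B, SameComp N a b) →
    (∀ a ∈ B', ∀ b ∈ B', SameComp N a b) →
    (∀ a ∈ B, ∀ b ∈ B', ¬ SameComp N a b) → T (B ∪ B') = none)

/-- Principal typing: locally total, tight (and well-formed), sound and complete. -/
def PrincipalFor (N : Network ι isIn) (T : Typing ι) : Prop :=
  WF T ∧ LocallyTotal N T ∧ Tight isIn T ∧ Sound N T ∧ Complete N T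

/-- A principal typing over a fixed arc set: tight, total (well-formed), and
sound-and-complete for some network with that boundary. -/
def IsPrincipal {ι : Type*} [Fintype ι] [DecidableEq ι]
    (isIn : ι → Bool) (T : Typing ι) : Prop :=
  WF T ∧ TotalT T ∧ Tight isIn T ∧
    ∃ N : Network ι isIn, Sound N T ∧ Complete N T

/-- Boundary of external dimension 2: arc `0` is the input arc, arc `1` the
output arc. -/
def io2 : Fin 2 → Bool := fun a => decide (a = 0)

end

/-!
Summing flow conservation over all nodes shows that every feasible flow of a network with
one input and one output arc has `f a₁ = f a₂`; soundness transfers this to the polytope of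
`T`, and tightness makes each interval of `T` exactly the set of values of `θ(A)` on the
polytope. Hence the intervals of `{a₂}` and `{a₁, a₂}` are the images of `T {a₁} = [r, s]`
under `x ↦ -x` and `x ↦ 0`. Conversely, a single node with capacities `[r, s]` on both
arcs has feasible flows exactly `(x, x)` with `r ≤ x ≤ s`, which is the polytope of `T`.
-/

variable {ι : Type*} {isIn : ι → Bool}

@[simp]
lemma theta_empty (f : ι → ℝ) : theta isIn ∅ f = 0 := by
  simp [theta]

lemma theta_univ_eq_sub [Fintype ι] (f : ι → ℝ) :
    theta isIn univ f =
      (∑ a, if isIn a then f a else 0) - ∑ a, if ¬ isIn a then f a else 0 := by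
  rw [theta, ← sum_sub_distrib]
  refine sum_congr rfl fun a _ => ?_
  split_ifs <;> simp

lemma Network.Feasible.theta_univ_eq_zero [Fintype ι] {N : Network ι isIn} {f : ι → ℝ}
    {g : N.E → ℝ} (h : N.Feasible f g) : theta isIn univ f = 0 := by
  have hsum := sum_congr rfl fun v (_ : v ∈ (univ : Finset N.V)) => h.2.2 v
  simp only [sum_add_distrib, sum_comm (s := (univ : Finset N.V)), ite_and, sum_ite_eq,
    mem_univ, if_true] at hsum
  rw [theta_univ_eq_sub]
  linarith

lemma Sound.theta_univ_eq_zero [Fintype ι] {N : Network ι isIn} {T : Typing ι}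
    (hS : Sound N T) {f : ι → ℝ} (hf : f ∈ Poly isIn T) : theta isIn univ f = 0 :=
  let ⟨_, hg⟩ := hS f hf
  hg.theta_univ_eq_zero

lemma Tight.image_theta_poly {T : Typing ι} (hT : Tight isIn T) {A : Finset ι} {r s : ℝ}
    (hA : T A = some (r, s)) : theta isIn A '' Poly isIn T = Set.Icc r s := by
  ext x
  constructor
  · rintro ⟨f, hf, rfl⟩
    exact hf.2 A r s hA
  · rintro ⟨hrx, hxs⟩
    obtain ⟨f, hf, hfx⟩ := hT A r s hA x hrx hxs
    exact ⟨f, hf, hfx⟩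

lemma exists_image_theta_poly_eq_Icc {T : Typing ι} (hWF : WF T) (hTot : TotalT T)
    (hT : Tight isIn T) (A : Finset ι) :
    ∃ r s, T A = some (r, s) ∧ r ≤ s ∧ theta isIn A '' Poly isIn T = Set.Icc r s := by
  obtain ⟨⟨r, s⟩, hA⟩ := Option.isSome_iff_exists.mp (hTot A)
  exact ⟨r, s, hA, hWF A r s hA, hT.image_theta_poly hA⟩

def singleNode [Fintype ι] (lc uc : ι → ℝ) (hlc : ∀ a, 0 ≤ lc a) (hle : ∀ a, lc a ≤ uc a) :
    Network ι isIn where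
  V := Unit
  E := Empty
  src := isEmptyElim
  tgt := isEmptyElim
  ioNode _ := ()
  lcE := isEmptyElim
  ucE := isEmptyElim
  lcIO := lc
  ucIO := uc
  lcE_nonneg := isEmptyElim
  lcE_le_ucE := isEmptyElim
  lcIO_nonneg := hlc
  lcIO_le_ucIO := hle

lemma singleNode_feasible_iff [Fintype ι] {lc uc : ι → ℝ} {hlc : ∀ a, 0 ≤ lc a}
    {hle : ∀ a, lc a ≤ uc a} {f : ι → ℝ} {g : Empty → ℝ} :
    (singleNode lc uc hlc hle : Network ι isIn).Feasible f g ↔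
      (∀ a, lc a ≤ f a ∧ f a ≤ uc a) ∧ theta isIn univ f = 0 := by
  simp [Network.Feasible, singleNode, theta_univ_eq_sub, sub_eq_zero]

@[simp] lemma theta_io2_zero (f : Fin 2 → ℝ) : theta io2 {0} f = f 0 := by
  simp [theta, io2]

@[simp] lemma theta_io2_one (f : Fin 2 → ℝ) : theta io2 {1} f = -f 1 := by
  simp [theta, io2]

@[simp] lemma theta_io2_univ (f : Fin 2 → ℝ) : theta io2 univ f = f 0 - f 1 := by
  simp [theta, io2, Fin.sum_univ_two, sub_eq_add_neg]

def pipe {r s : ℝ} (hr : 0 ≤ r) (hrs : r ≤ s) : Network (Fin 2) io2 :=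
  singleNode (fun _ => r) (fun _ => s) (fun _ => hr) (fun _ => hrs)

lemma pipe_feasible_iff {r s : ℝ} (hr : 0 ≤ r) (hrs : r ≤ s) {f : Fin 2 → ℝ} {g : Empty → ℝ} :
    (pipe hr hrs).Feasible f g ↔ (∀ a, r ≤ f a ∧ f a ≤ s) ∧ f 0 = f 1 :=
  singleNode_feasible_iff.trans <| and_congr_right' <| by rw [theta_io2_univ, sub_eq_zero]

lemma finset_fin_two_cases (A : Finset (Fin 2)) : A = ∅ ∨ A = {0} ∨ A = {1} ∨ A = univ := by
  revert A; decide

/-- The typing of a pipe from the input arc `0` to the output arc `1` carrying a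
flow in `[r, s]`. -/
def IsPipeTyping (T : Typing (Fin 2)) (r s : ℝ) : Prop :=
  T ∅ = some (0, 0) ∧ T univ = some (0, 0) ∧ T {0} = some (r, s) ∧ T {1} = some (-s, -r)

namespace IsPipeTyping

variable {T : Typing (Fin 2)} {r s : ℝ}

lemma forall_eq_some_iff (hT : IsPipeTyping T r s) {P : Finset (Fin 2) → ℝ → ℝ → Prop} :
    (∀ A r' s', T A = some (r', s') → P A r' s') ↔
      P ∅ 0 0 ∧ P univ 0 0 ∧ P {0} r s ∧ P {1} (-s) (-r) := by
  obtain ⟨hE, hU, h0, h1⟩ := hT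
  refine ⟨fun h => ⟨h _ _ _ hE, h _ _ _ hU, h _ _ _ h0, h _ _ _ h1⟩, ?_⟩
  rintro ⟨pE, pU, p0, p1⟩ A r' s' hA
  rcases finset_fin_two_cases A with rfl | rfl | rfl | rfl <;>
    simp_all only [Option.some.injEq, Prod.mk.injEq]

lemma totalT (hT : IsPipeTyping T r s) : TotalT T := by
  obtain ⟨hE, hU, h0, h1⟩ := hT
  intro A
  rcases finset_fin_two_cases A with rfl | rfl | rfl | rfl <;> simp [*]

lemma wf (hT : IsPipeTyping T r s) (hrs : r ≤ s) : WF T := by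
  unfold WF
  rw [hT.forall_eq_some_iff]
  exact ⟨le_rfl, le_rfl, hrs, neg_le_neg hrs⟩

lemma mem_poly_iff (hT : IsPipeTyping T r s) (hr : 0 ≤ r) {f : Fin 2 → ℝ} :
    f ∈ Poly io2 T ↔ (∀ a, r ≤ f a ∧ f a ≤ s) ∧ f 0 = f 1 := by
  simp only [Poly, Satisfies, Set.mem_ofPred_eq, hT.forall_eq_some_iff, theta_empty,
    theta_io2_zero, theta_io2_one, theta_io2_univ, Fin.forall_fin_two]
  constructor
  · rintro ⟨-, -, ⟨hU₁, hU₂⟩, h0, h1₁, h1₂⟩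
    exact ⟨⟨h0, by linarith, by linarith⟩, by linarith⟩
  · rintro ⟨⟨⟨h0₁, h0₂⟩, h1₁, h1₂⟩, hbal⟩
    refine ⟨⟨by linarith, by linarith⟩, ⟨le_rfl, le_rfl⟩, ⟨?_, ?_⟩, ⟨h0₁, h0₂⟩, ?_, ?_⟩ <;>
      linarith

lemma const_mem_poly (hT : IsPipeTyping T r s) (hr : 0 ≤ r) {x : ℝ} (hrx : r ≤ x)
    (hxs : x ≤ s) : (fun _ => x) ∈ Poly io2 T :=
  (hT.mem_poly_iff hr).mpr ⟨fun _ => ⟨hrx, hxs⟩, rfl⟩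

lemma tight (hT : IsPipeTyping T r s) (hr : 0 ≤ r) (hrs : r ≤ s) : Tight io2 T := by
  unfold Tight
  rw [hT.forall_eq_some_iff]
  refine ⟨?_, ?_, ?_, ?_⟩ <;> intro x hx₁ hx₂
  · exact ⟨_, hT.const_mem_poly hr le_rfl hrs, by simp; linarith⟩
  · exact ⟨_, hT.const_mem_poly hr le_rfl hrs, by simp; linarith⟩
  · exact ⟨_, hT.const_mem_poly hr hx₁ hx₂, by simp⟩
  · exact ⟨_, hT.const_mem_poly hr (le_neg.mpr hx₂) (neg_le.mpr hx₁), by simp⟩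

lemma sound (hT : IsPipeTyping T r s) (hr : 0 ≤ r) (hrs : r ≤ s) : Sound (pipe hr hrs) T :=
  fun _ hf => ⟨Empty.elim, (pipe_feasible_iff hr hrs).mpr ((hT.mem_poly_iff hr).mp hf)⟩

lemma complete (hT : IsPipeTyping T r s) (hr : 0 ≤ r) (hrs : r ≤ s) :
    Complete (pipe hr hrs) T :=
  fun _ _ hfg => (hT.mem_poly_iff hr).mpr ((pipe_feasible_iff hr hrs).mp hfg)

lemma isPrincipal (hT : IsPipeTyping T r s) (hr : 0 ≤ r) (hrs : r ≤ s) : IsPrincipal io2 T :=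
  ⟨hT.wf hrs, hT.totalT, hT.tight hr hrs, pipe hr hrs, hT.sound hr hrs, hT.complete hr hrs⟩

end IsPipeTyping

lemma IsPrincipal.exists_isPipeTyping {T : Typing (Fin 2)} (hT : IsPrincipal io2 T) :
    ∃ r s, 0 ≤ r ∧ r ≤ s ∧ IsPipeTyping T r s := by
  obtain ⟨hWF, hTot, hTight, N, hSound, -⟩ := hT
  have interval := exists_image_theta_poly_eq_Icc hWF hTot hTight
  obtain ⟨r, s, h0, hrs, himg0⟩ := interval {0}
  obtain ⟨p, q, h1, hpq, himg1⟩ := interval {1}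
  obtain ⟨rE, sE, hE, -, himgE⟩ := interval ∅
  obtain ⟨rU, sU, hU, -, himgU⟩ := interval univ
  have hbal (f) (hf : f ∈ Poly io2 T) : f 0 = f 1 := by
    simpa [sub_eq_zero] using hSound.theta_univ_eq_zero hf
  have hne : (Poly io2 T).Nonempty :=
    Set.image_nonempty.mp (himg0 ▸ Set.nonempty_Icc.mpr hrs)
  have hIccE : Set.Icc rE sE = {0} := by
    simpa [← himgE] using hne.image_const 0
  have hIccU : Set.Icc rU sU = {0} := by
    rw [← himgU, ← hne.image_const 0]
    exact Set.image_congr fun f hf => by simp [hbal f hf]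
  have hIcc1 : Set.Icc p q = Set.Icc (-s) (-r) := by
    rw [← himg1, ← Set.neg_Icc, ← himg0, ← Set.image_neg_eq_neg, Set.image_image]
    exact Set.image_congr fun f hf => by simp [hbal f hf]
  have hr : 0 ≤ r := by
    obtain ⟨f, hf, hfr⟩ := himg0 ▸ Set.left_mem_Icc.mpr hrs
    simpa [← hfr] using hf.1 0
  obtain ⟨rfl, rfl⟩ := Set.Icc_eq_singleton_iff.mp hIccE
  obtain ⟨rfl, rfl⟩ := Set.Icc_eq_singleton_iff.mp hIccU
  obtain ⟨rfl, rfl⟩ := (Set.Icc_eq_Icc_iff hpq).mp hIcc1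
  exact ⟨r, s, hr, hrs, hE, hU, h0, h1⟩

theorem dim2_principal_characterization_general (T : Typing (Fin 2)) :
    (IsPrincipal io2 T ↔
      ∃ r s : ℝ, 0 ≤ r ∧ r ≤ s ∧
        T ∅ = some (0, 0) ∧ T Finset.univ = some (0, 0) ∧
        T {0} = some (r, s) ∧ T {1} = some (-s, -r)) ∧
    (∀ r s : ℝ, 0 ≤ r → r ≤ s →
      T ∅ = some (0, 0) → T Finset.univ = some (0, 0) →
      T {0} = some (r, s) → T {1} = some (-s, -r) →
      ∃ N : Network (Fin 2) io2, Nonempty N.V ∧ Subsingleton N.V ∧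
        IsEmpty N.E ∧ Sound N T ∧ Complete N T) := by
  refine ⟨⟨IsPrincipal.exists_isPipeTyping, ?_⟩, ?_⟩
  · rintro ⟨r, s, hr, hrs, hT⟩
    exact IsPipeTyping.isPrincipal hT hr hrs
  · intro r s hr hrs hE hU h0 h1
    have hT : IsPipeTyping T r s := ⟨hE, hU, h0, h1⟩
    exact ⟨pipe hr hrs, inferInstanceAs (Nonempty Unit),
      inferInstanceAs (Subsingleton Unit), inferInstanceAs (IsEmpty Empty),
      hT.sound hr hrs, hT.complete hr hrs⟩

/-- A total typing `T` over one input arc `a₁ = 0` and one output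
arc `a₂ = 1` is the principal typing of some network iff there are `0 ≤ r ≤ s`
with `T ∅ = T {a₁,a₂} = [0,0]`, `T {a₁} = [r,s]` and `T {a₂} = [−s,−r]`; moreover
any such `T` is realized by a one-node network. -/
theorem dim2_principal_characterization (T : Typing (Fin 2)) (hTot : TotalT T) :
    (IsPrincipal io2 T ↔
      ∃ r s : ℝ, 0 ≤ r ∧ r ≤ s ∧
        T ∅ = some (0, 0) ∧ T Finset.univ = some (0, 0) ∧
        T {0} = some (r, s) ∧ T {1} = some (-s, -r)) ∧
    (∀ r s : ℝ, 0 ≤ r → r ≤ s →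
      T ∅ = some (0, 0) → T Finset.univ = some (0, 0) →
      T {0} = some (r, s) → T {1} = some (-s, -r) →
      ∃ N : Network (Fin 2) io2, Nonempty N.V ∧ Subsingleton N.V ∧
        IsEmpty N.E ∧ Sound N T ∧ Complete N T) :=
  dim2_principal_characterization_general T

end FlowTyping
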